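/- Let K be a field of characteristic zero, α_1,…,α_m ∈ K, l ≥ 1 an integer, μ ∈ {0,1,…,m}, and let σ_i be defined by Π_{j=1}^m (α_j − w)^l = Σ_{i=0}^{ml} σ_i w^i. Set B_{l,μ,0}(t) = Σ_{i=0}^{ml} σ_i · ((ml+μ)!/(i+μ)!) · t^{ml−i} and B_{l,μ,j}(t) = (ml+μ)! Σ_{N=0}^{ml+μ−1} t^N Σ_{h=0}^{min{ml,N}} σ_{ml−h} · ((N−h)!/(ml−h+μ)!) · α_j^{N−h}. Then as formal power series in K[[t]], for each j = 1,…,m one has B_{l,μ,0}(t)·F(α_j t) − B_{l,μ,j}(t) = S_{l,μ,j}(t), where F(t) = Σ_{n≥0} n! t^n and S_{l,μ,j}(t) = (ml+μ)!·l!·t^{(m+1)l+μ} · Σ_{k≥0} t^k · k! · C(l+k, k) · α_j^{l+μ+k} · Σ_{i=0}^{ml} σ_i · C(i+μ+l+k, i+μ) · α_j^i. -/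

import Mathlib

/-!
Write `Q(w) = ∏ (α_j - w)^l = ∑ σ_i w^i` and `P = ml`. Since `B_{l,μ,0}` is a reversed
polynomial, the coefficient of `t^N` in `B_{l,μ,0}(t) F(α_j t)` is
`(P+μ)! ∑_h σ_{P-h} (N-h)!/(P-h+μ)! α_j^{N-h}`, which is the coefficient of `B_{l,μ,j}` for
`N < P + μ`. For `N = P + s` with `s ≥ μ` it equals
`(P+μ)! ∑_i σ_i (s+i)!/(i+μ)! α_j^{s+i} = (P+μ)! α_j^{s-μ} (d/dw)^{s-μ} (w^s Q(w)) |_{w = α_j}`,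
which vanishes for `s < l + μ` because `α_j` is a root of `Q` of multiplicity at least `l`.
For `s = l + μ + k` the factorial identity `(l+μ+k+i)!/(i+μ)! = l! k! C(l+k,k) C(i+μ+l+k,i+μ)`
turns it into the coefficient of `S_{l,μ,j}`.
-/

open Polynomial Finset Nat

section CommRing

variable {R : Type*} [CommRing R]

theorem Polynomial.eval_iterate_derivative_eq_zero_of_pow_dvd {p : R[X]} {a : R} {l n : ℕ}
    (h : (X - C a) ^ l ∣ p) (hn : n < l) : (derivative^[n] p).eval a = 0 :=
  dvd_iff_isRoot.mp <| (dvd_pow_self _ (Nat.sub_ne_zero_of_lt hn)).trans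
    (pow_sub_dvd_iterate_derivative_of_pow_dvd n h)

theorem Polynomial.pow_mul_eval_iterate_derivative_mul_X_pow {p : R[X]} {d : ℕ}
    (hp : p.natDegree < d) {n s : ℕ} (hns : n ≤ s) (a : R) :
    a ^ n * (derivative^[n] (p * X ^ s)).eval a =
      ∑ i ∈ range d, p.coeff i * (s + i).descFactorial n * a ^ (s + i) := by
  conv_lhs => rw [p.as_sum_range' d hp]
  rw [Finset.sum_mul, iterate_derivative_sum, eval_finsetSum, mul_sum]
  refine sum_congr rfl fun i _ => ?_
  have hpow : a ^ n * a ^ (s + i - n) = a ^ (s + i) := by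
    rw [← pow_add, Nat.add_sub_cancel' (by omega)]
  rw [← C_mul_X_pow_eq_monomial, mul_assoc, ← pow_add, add_comm i s, iterate_derivative_C_mul,
    iterate_derivative_X_pow_eq_C_mul]
  simp only [eval_mul, eval_C, eval_pow, eval_X]
  linear_combination (p.coeff i * (s + i).descFactorial n) * hpow

theorem Polynomial.natDegree_prod_C_sub_X_pow_le {ι : Type*} (s : Finset ι) (α : ι → R) (l : ℕ) :
    (∏ j ∈ s, (C (α j) - X) ^ l).natDegree ≤ s.card * l := by
  refine (natDegree_prod_le _ _).trans ?_
  refine (sum_le_card_nsmul _ _ l fun j _ => ?_).trans (by simp)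
  have hdeg : (C (α j) - X).natDegree ≤ 1 :=
    (natDegree_sub_le _ _).trans (by simp [natDegree_X_le])
  simpa using natDegree_pow_le.trans (Nat.mul_le_mul_left l hdeg)

end CommRing

theorem Polynomial.coeff_coe_sum_C_mul_X_pow_mul {R ι : Type*} [CommSemiring R] (s : Finset ι)
    (b : ι → R) (e : ι → ℕ) (g : PowerSeries R) (N : ℕ) :
    PowerSeries.coeff N (((∑ i ∈ s, C (b i) * X ^ e i : R[X]) : PowerSeries R) * g) =
      ∑ i ∈ s, if e i ≤ N then b i * PowerSeries.coeff (N - e i) g else 0 := by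
  rw [← coeToPowerSeries.ringHom_apply, map_sum, Finset.sum_mul, map_sum]
  refine sum_congr rfl fun i _ => ?_
  rw [coeToPowerSeries.ringHom_apply, coe_mul, coe_pow, coe_C, coe_X, mul_assoc,
    PowerSeries.coeff_C_mul, PowerSeries.coeff_X_pow_mul', mul_ite, mul_zero]

theorem Finset.sum_range_succ_ite_sub_le {M : Type*} [AddCommMonoid M] (f : ℕ → M) (P N : ℕ) :
    ∑ i ∈ range (P + 1), (if P - i ≤ N then f i else 0) =
      ∑ h ∈ range (min P N + 1), f (P - h) := by
  rw [← sum_range_reflect, ← sum_filter, add_tsub_cancel_right]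
  congr 1
  ext h
  simp only [mem_range, mem_filter]
  omega

section ReversedPolynomial

variable {R : Type*} [CommSemiring R] (b : ℕ → R) (P : ℕ) (g : PowerSeries R)

theorem Polynomial.coeff_coe_sum_C_mul_X_pow_sub_mul (N : ℕ) :
    PowerSeries.coeff N
        (((∑ i ∈ range (P + 1), C (b i) * X ^ (P - i) : R[X]) : PowerSeries R) * g) =
      ∑ h ∈ range (min P N + 1), b (P - h) * PowerSeries.coeff (N - h) g := by
  rw [coeff_coe_sum_C_mul_X_pow_mul, sum_range_succ_ite_sub_le]
  refine sum_congr rfl fun h hh => ?_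
  rw [Nat.sub_sub_self (by simp at hh; omega)]

theorem Polynomial.coeff_add_coe_sum_C_mul_X_pow_sub_mul (s : ℕ) :
    PowerSeries.coeff (P + s)
        (((∑ i ∈ range (P + 1), C (b i) * X ^ (P - i) : R[X]) : PowerSeries R) * g) =
      ∑ i ∈ range (P + 1), b i * PowerSeries.coeff (s + i) g := by
  rw [coeff_coe_sum_C_mul_X_pow_mul]
  refine sum_congr rfl fun i hi => ?_
  rw [if_pos (by omega), show P + s - (P - i) = s + i by simp at hi; omega]

end ReversedPolynomial

section Field

variable {K : Type*} [Field K] [CharZero K]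

theorem Nat.cast_factorial_add_add_div_factorial (a b c : ℕ) :
    ((a + b + c)! : K) / (a ! : K) = b ! * c ! * (b + c).choose c * (a + b + c).choose a := by
  rw [div_eq_iff (Nat.cast_ne_zero.2 (factorial_ne_zero _)), show a + b + c = b + c + a by ring,
    ← add_choose_mul_factorial_mul_factorial (b + c) a,
    ← add_choose_mul_factorial_mul_factorial b c]
  push_cast
  ring

theorem Nat.cast_factorial_div_factorial_sub {n k : ℕ} (h : k ≤ n) :
    (n ! : K) / ((n - k)! : K) = n.descFactorial k := by
  rw [div_eq_iff (Nat.cast_ne_zero.2 (factorial_ne_zero _)), ← Nat.factorial_mul_descFactorial h]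
  push_cast
  ring

theorem Polynomial.sum_coeff_mul_factorial_div_mul_pow_eq_zero {Q : K[X]} {a : K} {l d μ s : ℕ}
    (hQ : Q.natDegree < d) (hdvd : (X - C a) ^ l ∣ Q) (hμs : μ ≤ s) (hs : s < l + μ) :
    ∑ i ∈ range d, Q.coeff i * (((s + i)! : K) / ((i + μ)! : K)) * a ^ (s + i) = 0 := by
  have h := pow_mul_eval_iterate_derivative_mul_X_pow hQ (n := s - μ) (s := s) (by omega) a
  rw [eval_iterate_derivative_eq_zero_of_pow_dvd (hdvd.mul_right _) (by omega), mul_zero] at h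
  rw [h]
  refine sum_congr rfl fun i _ => ?_
  rw [← Nat.cast_factorial_div_factorial_sub (by omega), show s + i - (s - μ) = i + μ by omega]

theorem sum_mul_factorial_div_mul_pow_eq_choose (c : ℕ → K) (a : K) (d l μ k : ℕ) :
    ∑ i ∈ range d, c i * (((l + μ + k + i)! : K) / ((i + μ)! : K)) * a ^ (l + μ + k + i) =
      l ! * k ! * (l + k).choose k * a ^ (l + μ + k) *
        ∑ i ∈ range d, c i * (i + μ + l + k).choose (i + μ) * a ^ i := by
  rw [mul_sum]
  refine sum_congr rfl fun i _ => ?_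
  rw [show l + μ + k + i = i + μ + l + k by ring, Nat.cast_factorial_add_add_div_factorial,
    show i + μ + l + k = l + μ + k + i by ring, pow_add]
  ring

end Field

theorem pade_euler_series_general {K : Type*} [Field K] [CharZero K]
    {m : ℕ} (α : Fin m → K) (l μ : ℕ)
    (σ : ℕ → K)
    (hσ : ∀ i, σ i = (∏ j, (C (α j) - X) ^ l).coeff i)
    (B0 : K[X])
    (hB0 : B0 = ∑ i ∈ range (m * l + 1),
        C (σ i * (((m * l + μ)! : K) / ((i + μ)! : K))) * X ^ (m * l - i))
    (Bj : Fin m → K[X])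
    (hBj : ∀ j, Bj j = C (((m * l + μ)! : ℕ) : K) *
        ∑ N ∈ range (m * l + μ),
          C (∑ h ∈ range (min (m * l) N + 1),
              σ (m * l - h) * (((N - h)! : K) / ((m * l - h + μ)! : K)) *
                (α j) ^ (N - h)) * X ^ N)
    (S : Fin m → PowerSeries K)
    (hS : ∀ j, S j = PowerSeries.mk fun N =>
        if (m + 1) * l + μ ≤ N then
          ((m * l + μ)! : K) * (l ! : K) *
            (((N - ((m + 1) * l + μ))! : ℕ) : K) *
            (((l + (N - ((m + 1) * l + μ))).choose (N - ((m + 1) * l + μ)) : ℕ) : K) *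
            (α j) ^ (l + μ + (N - ((m + 1) * l + μ))) *
            ∑ i ∈ range (m * l + 1),
              σ i * (((i + μ + l + (N - ((m + 1) * l + μ))).choose (i + μ) : ℕ) : K) *
                (α j) ^ i
        else 0)
    (j : Fin m) :
    (B0 : PowerSeries K) * (PowerSeries.mk fun n => ((n ! : ℕ) : K) * (α j) ^ n) -
        (Bj j : PowerSeries K) = S j := by
  set P := m * l
  set Q : K[X] := ∏ j, (C (α j) - X) ^ l
  obtain rfl : σ = Q.coeff := funext hσ
  have hQ : Q.natDegree < P + 1 :=
    Nat.lt_succ_of_le (by simpa using natDegree_prod_C_sub_X_pow_le univ α l)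
  have hdvd : (X - C (α j)) ^ l ∣ Q :=
    (pow_dvd_pow_of_dvd ⟨-1, by ring⟩ l).trans (dvd_prod_of_mem _ (mem_univ j))
  set F : PowerSeries K := PowerSeries.mk fun n => ((n ! : ℕ) : K) * α j ^ n
  have hBj_coeff (N : ℕ) : PowerSeries.coeff N (Bj j : PowerSeries K) = if N < P + μ then
      (P + μ)! * ∑ h ∈ range (min P N + 1),
        Q.coeff (P - h) * ((N - h)! / (P - h + μ)! : K) * α j ^ (N - h) else 0 := by
    rw [Polynomial.coeff_coe, hBj j, coeff_C_mul, finsetSum_coeff]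
    simp only [coeff_C_mul_X_pow, sum_ite_eq, mem_range, mul_ite, mul_zero]
  have hB0F_coeff (N : ℕ) : PowerSeries.coeff N ((B0 : PowerSeries K) * F) =
      (P + μ)! * ∑ h ∈ range (min P N + 1),
        Q.coeff (P - h) * ((N - h)! / (P - h + μ)! : K) * α j ^ (N - h) := by
    rw [hB0, coeff_coe_sum_C_mul_X_pow_sub_mul, mul_sum]
    exact sum_congr rfl fun h _ => by rw [PowerSeries.coeff_mk]; ring
  have hB0F_coeff_add (s : ℕ) : PowerSeries.coeff (P + s) ((B0 : PowerSeries K) * F) =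
      (P + μ)! * ∑ i ∈ range (P + 1), Q.coeff i * ((s + i)! / (i + μ)! : K) * α j ^ (s + i) := by
    rw [hB0, coeff_add_coe_sum_C_mul_X_pow_sub_mul, mul_sum]
    exact sum_congr rfl fun i _ => by rw [PowerSeries.coeff_mk]; ring
  have hml : (m + 1) * l + μ = P + l + μ := by simp only [P]; ring
  ext N
  rw [map_sub, hBj_coeff, hS j, PowerSeries.coeff_mk, hml]
  rcases lt_or_ge N (P + μ) with hN | hN
  · rw [hB0F_coeff, if_pos hN, if_neg (by omega), sub_self]
  obtain ⟨s, rfl⟩ := Nat.exists_eq_add_of_le (show P ≤ N by omega)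
  rw [hB0F_coeff_add, if_neg (by omega), sub_zero]
  rcases lt_or_ge s (l + μ) with hs | hs
  · rw [if_neg (by omega), sum_coeff_mul_factorial_div_mul_pow_eq_zero hQ hdvd (by omega) hs,
      mul_zero]
  obtain ⟨k, rfl⟩ := Nat.exists_eq_add_of_le hs
  rw [if_pos (by omega), show P + (l + μ + k) - (P + l + μ) = k by omega,
    sum_mul_factorial_div_mul_pow_eq_choose]
  ring

/-- Padé approximation formula for Euler's factorial series,
as an identity of formal power series:
`B_{l,μ,0}(t)·F(α_j t) − B_{l,μ,j}(t) = S_{l,μ,j}(t)`. -/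
theorem pade_euler_series {K : Type*} [Field K] [CharZero K]
    {m : ℕ} (α : Fin m → K) (l μ : ℕ) (hl : 1 ≤ l) (hμ : μ ≤ m)
    (σ : ℕ → K)
    (hσ : ∀ i, σ i = (∏ j, (C (α j) - X) ^ l).coeff i)
    (B0 : K[X])
    (hB0 : B0 = ∑ i ∈ range (m * l + 1),
        C (σ i * (((m * l + μ)! : K) / ((i + μ)! : K))) * X ^ (m * l - i))
    (Bj : Fin m → K[X])
    (hBj : ∀ j, Bj j = C (((m * l + μ)! : ℕ) : K) *
        ∑ N ∈ range (m * l + μ),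
          C (∑ h ∈ range (min (m * l) N + 1),
              σ (m * l - h) * (((N - h)! : K) / ((m * l - h + μ)! : K)) *
                (α j) ^ (N - h)) * X ^ N)
    (S : Fin m → PowerSeries K)
    (hS : ∀ j, S j = PowerSeries.mk fun N =>
        if (m + 1) * l + μ ≤ N then
          ((m * l + μ)! : K) * (l ! : K) *
            (((N - ((m + 1) * l + μ))! : ℕ) : K) *
            (((l + (N - ((m + 1) * l + μ))).choose (N - ((m + 1) * l + μ)) : ℕ) : K) *
            (α j) ^ (l + μ + (N - ((m + 1) * l + μ))) *
            ∑ i ∈ range (m * l + 1),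
              σ i * (((i + μ + l + (N - ((m + 1) * l + μ))).choose (i + μ) : ℕ) : K) *
                (α j) ^ i
        else 0)
    (j : Fin m) :
    (B0 : PowerSeries K) * (PowerSeries.mk fun n => ((n ! : ℕ) : K) * (α j) ^ n) -
        (Bj j : PowerSeries K) = S j :=
  pade_euler_series_general α l μ σ hσ B0 hB0 Bj hBj S hS j
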